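/- arXiv:1511.03126 — 2 statements merged into one kernel-verified Lean document; each statement's English description precedes it below -/
import Mathlib

section
/- Let κ ∈ ℂ with Im κ > 0 and let β₀ solve i β₀'(t) = (κ/t)|β₀|²β₀ with β₀(1) = ε θ₀ for θ₀ ∈ ℂ, θ₀ ≠ 0, ε > 0. Set τ₁ = 1/(2ε²|θ₀|² Im κ). Then |β₀(t)| → ∞ as t → exp(τ₁) from below, i.e. for every M > 0 there exists t < exp(τ₁) with |β₀(t)| > M. -/
/-!
Along a solution, `u = |β₀|²` solves the Riccati equation `u' = (2 Im κ / t) u²`, so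
`1/u + 2 Im κ · log t` is conserved. Hence `1/u(t) = 2 Im κ (τ₁ - log t)`, which tends to `0⁺`
as `t → exp τ₁` from below.
-/

open Filter Topology Set Real

theorem inv_add_mul_log_eq_of_hasDerivAt {u : ℝ → ℝ} {c T : ℝ} (hc : 0 ≤ c) (hu₁ : 0 < u 1)
    (hu : ∀ t ∈ Ico 1 T, HasDerivAt u (c / t * u t ^ 2) t) :
    ∀ t ∈ Ico 1 T, (u t)⁻¹ + c * log t = (u 1)⁻¹ := by
  have hmono : MonotoneOn u (Ico 1 T) :=
    monotoneOn_of_hasDerivWithinAt_nonneg (convex_Ico 1 T)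
      (fun t ht => (hu t ht).continuousAt.continuousWithinAt)
      (fun t ht => (hu t (interior_subset ht)).hasDerivWithinAt)
      (fun t ht => by have := (interior_subset ht).1; positivity)
  have hpos : ∀ t ∈ Ico 1 T, 0 < u t := fun t ht =>
    hu₁.trans_le (hmono ⟨le_rfl, ht.1.trans_lt ht.2⟩ ht ht.1)
  have hderiv : ∀ t ∈ Ico 1 T, HasDerivAt (fun s => (u s)⁻¹ + c * log s) 0 t := by
    intro t ht
    have ht₀ : t ≠ 0 := (one_pos.trans_le ht.1).ne'
    have h := ((hu t ht).inv (hpos t ht).ne').add ((hasDerivAt_log ht₀).const_mul c)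
    have h₀ : -(c / t * u t ^ 2) / u t ^ 2 + c * t⁻¹ = 0 := by
      field_simp [(hpos t ht).ne']
      ring
    rwa [h₀] at h
  intro t ht
  have hsub : Icc 1 t ⊆ Ico 1 T := Icc_subset_Ico_right ht.2
  simpa using constant_of_has_deriv_right_zero
    (fun s hs => (hderiv s (hsub hs)).continuousAt.continuousWithinAt)
    (fun s hs => (hderiv s (hsub (Ico_subset_Icc_self hs))).hasDerivWithinAt) t ⟨ht.1, le_rfl⟩

theorem tendsto_atTop_of_hasDerivAt_riccati {u : ℝ → ℝ} {c : ℝ} (hc : 0 < c) (hu₁ : 0 < u 1)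
    (hu : ∀ t ∈ Ico 1 (exp (c * u 1)⁻¹), HasDerivAt u (c / t * u t ^ 2) t) :
    Tendsto u (𝓝[<] exp (c * u 1)⁻¹) atTop := by
  set τ := (c * u 1)⁻¹ with hτ
  have hgap : Tendsto (fun t => c * (τ - log t)) (𝓝[<] exp τ) (𝓝[>] 0) := by
    refine tendsto_nhdsWithin_of_tendsto_nhds_of_eventually_within _ ?_ ?_
    · have := ((continuousAt_log (exp_pos τ).ne').tendsto.const_sub τ).const_mul c
      rw [log_exp, sub_self, mul_zero] at this
      exact this.mono_left nhdsWithin_le_nhds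
    · filter_upwards [Ioo_mem_nhdsLT (exp_pos τ)] with t ht
      exact mul_pos hc (sub_pos.2 ((log_lt_iff_lt_exp ht.1).2 ht.2))
  refine (tendsto_inv_nhdsGT_zero.comp hgap).congr' ?_
  filter_upwards [Ico_mem_nhdsLT (one_lt_exp_iff.2 (by positivity) : 1 < exp τ)] with t ht
  have hcτ : c * τ = (u 1)⁻¹ := by rw [hτ]; field_simp
  rw [Function.comp_apply, mul_sub, hcτ, ← inv_add_mul_log_eq_of_hasDerivAt hc.le hu₁ hu t ht,
    add_sub_cancel_right, inv_inv]

namespace Complex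

theorem inner_neg_I_mul_mul_norm_sq_mul_self (a z : ℂ) :
    inner ℝ z (-I * a * ((‖z‖ : ℝ) : ℂ) ^ 2 * z) = a.im * (‖z‖ ^ 2) ^ 2 := by
  rw [Complex.inner, mul_assoc, mul_conj, normSq_eq_norm_sq, ← ofReal_pow, re_mul_ofReal,
    re_mul_ofReal]
  simp only [neg_mul, neg_re, mul_re, I_re, zero_mul, I_im, one_mul, zero_sub, neg_neg]
  ring

end Complex

theorem hasDerivAt_norm_sq_of_hasDerivAt_cubic {β : ℝ → ℂ} {κ : ℂ} {t : ℝ}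
    (h : HasDerivAt β (-Complex.I * (κ / (t : ℂ)) * ((‖β t‖ : ℝ) : ℂ) ^ 2 * β t) t) :
    HasDerivAt (fun s => ‖β s‖ ^ 2) (2 * κ.im / t * (‖β t‖ ^ 2) ^ 2) t := by
  convert h.norm_sq using 1
  rw [Complex.inner_neg_I_mul_mul_norm_sq_mul_self, Complex.div_ofReal_im]
  ring

theorem tendsto_norm_atTop_of_hasDerivAt_cubic {β : ℝ → ℂ} {κ : ℂ} (hκ : 0 < κ.im)
    (hβ₁ : β 1 ≠ 0)
    (hode : ∀ t ∈ Ico 1 (exp (2 * κ.im * ‖β 1‖ ^ 2)⁻¹),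
      HasDerivAt β (-Complex.I * (κ / (t : ℂ)) * ((‖β t‖ : ℝ) : ℂ) ^ 2 * β t) t) :
    Tendsto (fun t => ‖β t‖) (𝓝[<] exp (2 * κ.im * ‖β 1‖ ^ 2)⁻¹) atTop := by
  have hsq := tendsto_atTop_of_hasDerivAt_riccati (u := fun s => ‖β s‖ ^ 2) (by positivity)
    (by positivity) fun t ht => hasDerivAt_norm_sq_of_hasDerivAt_cubic (hode t ht)
  exact (tendsto_sqrt_atTop.comp hsq).congr fun t => sqrt_sq (norm_nonneg _)

/-- blow-up of the unperturbed solution as `t → exp(τ₁)` when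
`Im κ > 0`, where `τ₁ = 1/(2ε²|θ₀|² Im κ)`. -/
theorem stmt3 (κ : ℂ) (hκ : 0 < κ.im) (θ₀ : ℂ) (hθ : θ₀ ≠ 0) (ε : ℝ) (hε : 0 < ε)
    (τ₁ : ℝ) (hτ : τ₁ = 1 / (2 * ε^2 * ‖θ₀‖^2 * κ.im))
    (β₀ : ℝ → ℂ)
    (hode : ∀ t ∈ Set.Ico (1 : ℝ) (Real.exp τ₁),
      HasDerivAt β₀ (-Complex.I * (κ / (t : ℂ)) * ((‖β₀ t‖ : ℝ) : ℂ)^2 * β₀ t) t)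
    (hinit : β₀ 1 = (ε : ℂ) * θ₀) :
    ∀ M : ℝ, 0 < M → ∃ t : ℝ, 1 ≤ t ∧ t < Real.exp τ₁ ∧ M < ‖β₀ t‖ := by
  intro M _
  have hτ' : τ₁ = (2 * κ.im * ‖β₀ 1‖ ^ 2)⁻¹ := by
    rw [hτ, hinit, norm_mul, Complex.norm_real, norm_of_nonneg hε.le, one_div]
    ring
  rw [hτ'] at hode ⊢
  have hβ₁ : β₀ 1 ≠ 0 := by simp [hinit, hε.ne', hθ]
  have hT : 1 < exp (2 * κ.im * ‖β₀ 1‖ ^ 2)⁻¹ := one_lt_exp_iff.2 (by positivity)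
  obtain ⟨t, hMt, ht⟩ := (((tendsto_norm_atTop_of_hasDerivAt_cubic hκ hβ₁ hode).eventually_gt_atTop
    M).and (Ico_mem_nhdsLT hT)).exists
  exact ⟨t, ht.1, ht.2, hMt⟩
end

section
/- Let w : [1,T) → ℂ be C¹ and nonnegative constants A, B, μ > 0 be given such that d/dt |w(t)|² ≤ (2A/t)|w(t)|² + (B/t^{1+μ})|w(t)| for t ∈ (1,T). Then for all t ∈ [1,T), |w(t)| ≤ (|w(1)| + B/(2(μ + A))) t^{A}. -/
/-!
For `ε > 0` put `c = |w 1| + ε` and `k = (B + ε) / (2 (μ + A))`. The explicit function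
`ρ s = (c + k) s ^ A - k s ^ (-μ)` satisfies `ρ 1 = c > |w 1|`, `ρ > 0` and
`(ρ²)' = 2 A ρ² / s + 2 k (μ + A) ρ / s ^ (1 + μ)`, where `2 k (μ + A) > B`. So at a first point where
`|w|²` reaches `ρ²`, the hypothesis forces `(|w|²)' < (ρ²)'`, which is impossible; hence
`|w| ≤ ρ ≤ (c + k) t ^ A`, and `ε → 0` gives the bound.
-/

open Set Filter Topology

theorem image_le_of_deriv_lt_deriv_boundary_of_lt {f f' φ φ' : ℝ → ℝ} {a b : ℝ}
    (hf : ContinuousOn f (Icc a b)) (hf' : ∀ x ∈ Ioo a b, HasDerivAt f (f' x) x)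
    (hφ : ContinuousOn φ (Icc a b)) (hφ' : ∀ x ∈ Ioo a b, HasDerivAt φ (φ' x) x)
    (ha : f a < φ a) (bound : ∀ x ∈ Ioo a b, f x = φ x → f' x < φ' x) :
    ∀ x ∈ Icc a b, f x ≤ φ x := by
  rintro x ⟨hax, hxb⟩
  rcases hax.eq_or_lt with rfl | hax
  · exact ha.le
  -- The derivative bounds are only available off `a`, so start the fence slightly to the right.
  have haab : a ∈ Icc a b := left_mem_Icc.2 (hax.le.trans hxb)
  have hstart : ∀ᶠ y in 𝓝[Ioo a x] a, f y < φ y :=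
    (((hf a haab).prodMk (hφ a haab)).mono (Ioo_subset_Icc_self.trans (Icc_subset_Icc_right hxb))
      ).eventually (isOpen_lt continuous_fst continuous_snd |>.mem_nhds ha)
  have := left_nhdsWithin_Ioo_neBot hax
  obtain ⟨a', ha', haa', ha'x⟩ := (hstart.and self_mem_nhdsWithin).exists
  have hsub : Ico a' x ⊆ Ioo a b := fun y hy => ⟨haa'.trans_le hy.1, hy.2.trans_le hxb⟩
  have hsubc : Icc a' x ⊆ Icc a b := Icc_subset_Icc haa'.le hxb
  exact image_le_of_deriv_right_lt_deriv_boundary' (hf.mono hsubc)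
    (fun y hy => (hf' y (hsub hy)).hasDerivWithinAt) ha'.le (hφ.mono hsubc)
    (fun y hy => (hφ' y (hsub hy)).hasDerivWithinAt) (fun y hy => bound y (hsub hy))
    ⟨ha'x.le, le_rfl⟩

noncomputable def gronwallBarrier (A μ c k s : ℝ) : ℝ := (c + k) * s ^ A - k * s ^ (-μ)

section gronwallBarrier

variable {A μ c k s : ℝ}

theorem gronwallBarrier_one : gronwallBarrier A μ c k 1 = c := by
  simp [gronwallBarrier]

theorem hasDerivAt_gronwallBarrier (hs : 0 < s) :
    HasDerivAt (gronwallBarrier A μ c k)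
      (A / s * gronwallBarrier A μ c k s + k * (μ + A) / s ^ (1 + μ)) s := by
  have h := ((Real.hasDerivAt_rpow_const (p := A) (Or.inl hs.ne')).const_mul (c + k)).sub
    ((Real.hasDerivAt_rpow_const (p := -μ) (Or.inl hs.ne')).const_mul k)
  refine h.congr_deriv ?_
  rw [gronwallBarrier, Real.rpow_sub hs, Real.rpow_sub hs, Real.rpow_add hs, Real.rpow_neg hs.le,
    Real.rpow_one]
  field_simp
  ring

theorem le_gronwallBarrier (hA : 0 ≤ A) (hμ : 0 ≤ μ) (hc : 0 ≤ c) (hk : 0 ≤ k) (hs : 1 ≤ s) :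
    c ≤ gronwallBarrier A μ c k s := by
  have h1 : s ^ (-μ) ≤ 1 := Real.rpow_le_one_of_one_le_of_nonpos hs (neg_nonpos.2 hμ)
  have h2 : 1 ≤ s ^ A := Real.one_le_rpow hs hA
  rw [gronwallBarrier]
  nlinarith

theorem gronwallBarrier_le_mul_rpow (hk : 0 ≤ k) (hs : 0 ≤ s) : gronwallBarrier A μ c k s ≤ (c + k) * s ^ A :=
  sub_le_self _ (mul_nonneg hk (Real.rpow_nonneg hs _))

end gronwallBarrier

theorem le_gronwallBarrier_of_hasDerivAt_sq {v g : ℝ → ℝ} {A B μ c k t : ℝ}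
    (hA : 0 ≤ A) (hμ : 0 ≤ μ) (hk : 0 ≤ k) (hBk : B < 2 * k * (μ + A)) (ht : 1 ≤ t)
    (hv_nonneg : ∀ s ∈ Icc 1 t, 0 ≤ v s) (hv : ContinuousOn v (Icc 1 t))
    (hderiv : ∀ s ∈ Ioo 1 t, HasDerivAt (fun s => v s ^ 2) (g s) s)
    (hg : ∀ s ∈ Ioo 1 t, g s ≤ 2 * A / s * v s ^ 2 + B / s ^ (1 + μ) * v s)
    (hc : v 1 < c) :
    v t ≤ gronwallBarrier A μ c k t := by
  set ρ := gronwallBarrier A μ c k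
  have hv1 := hv_nonneg 1 (left_mem_Icc.2 ht)
  have hρ_pos : ∀ s ∈ Icc 1 t, 0 < ρ s := fun s hs =>
    hv1.trans_lt (hc.trans_le (le_gronwallBarrier hA hμ (hv1.trans hc.le) hk hs.1))
  have hρ' : ∀ s ∈ Icc 1 t, HasDerivAt (fun s => ρ s ^ 2)
      (2 * A / s * ρ s ^ 2 + 2 * k * (μ + A) / s ^ (1 + μ) * ρ s) s := by
    intro s hs
    refine ((hasDerivAt_gronwallBarrier (zero_lt_one.trans_le hs.1)).pow 2).congr_deriv ?_
    have : s ≠ 0 := (zero_lt_one.trans_le hs.1).ne'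
    field_simp
    ring
  have hsq : v t ^ 2 ≤ ρ t ^ 2 := by
    refine image_le_of_deriv_lt_deriv_boundary_of_lt (hv.pow 2) hderiv
      (fun s hs => (hρ' s hs).continuousAt.continuousWithinAt)
      (fun s hs => hρ' s (Ioo_subset_Icc_self hs)) ?_ ?_ t (right_mem_Icc.2 ht)
    · simpa [ρ, gronwallBarrier_one] using pow_lt_pow_left₀ hc hv1 two_ne_zero
    · intro s hs hvρ
      have hs' := Ioo_subset_Icc_self hs
      have hvs : v s = ρ s := (pow_left_inj₀ (hv_nonneg s hs') (hρ_pos s hs').le two_ne_zero).1 hvρ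
      calc g s ≤ 2 * A / s * v s ^ 2 + B / s ^ (1 + μ) * v s := hg s hs
        _ < 2 * A / s * ρ s ^ 2 + 2 * k * (μ + A) / s ^ (1 + μ) * ρ s := by
          rw [hvs]
          have : 0 < s ^ (1 + μ) := Real.rpow_pos_of_pos (zero_lt_one.trans hs.1) _
          gcongr
          exact hρ_pos s hs'
  exact (pow_le_pow_iff_left₀ (hv_nonneg t (right_mem_Icc.2 ht)) (hρ_pos t (right_mem_Icc.2 ht)).le
    two_ne_zero).1 hsq

theorem stmt4_general (T A B μ : ℝ) (hA : 0 ≤ A) (hB : 0 ≤ B) (hμ : 0 < μ)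
    (w : ℝ → ℂ) (g : ℝ → ℝ)
    (hw : ContinuousOn w (Set.Ico (1 : ℝ) T))
    (hderiv : ∀ t ∈ Set.Ioo (1 : ℝ) T,
      HasDerivAt (fun s => ‖w s‖^2) (g t) t)
    (hg : ∀ t ∈ Set.Ioo (1 : ℝ) T,
      g t ≤ (2 * A / t) * ‖w t‖^2
            + (B / t ^ ((1 : ℝ) + μ)) * ‖w t‖) :
    ∀ t ∈ Set.Ico (1 : ℝ) T,
      ‖w t‖ ≤ (‖w 1‖ + B / (2 * (μ + A))) * t ^ A := by
  rintro t ⟨ht1, htT⟩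
  have hμA : 0 < μ + A := by linarith
  have hIcc : Icc 1 t ⊆ Ico 1 T := Icc_subset_Ico_right htT
  have hIoo : Ioo 1 t ⊆ Ioo 1 T := Ioo_subset_Ioo_right htT.le
  have hbound : ∀ ε > 0, ‖w t‖ ≤ (‖w 1‖ + ε + (B + ε) / (2 * (μ + A))) * t ^ A := by
    intro ε hε
    calc ‖w t‖ ≤ gronwallBarrier A μ (‖w 1‖ + ε) ((B + ε) / (2 * (μ + A))) t :=
          le_gronwallBarrier_of_hasDerivAt_sq hA hμ.le (by positivity)
            (by field_simp; linarith) ht1 (fun _ _ => norm_nonneg _) (hw.mono hIcc).norm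
            (fun s hs => hderiv s (hIoo hs)) (fun s hs => hg s (hIoo hs)) (by linarith)
      _ ≤ _ := gronwallBarrier_le_mul_rpow (by positivity) (by linarith)
  have hlim : Tendsto (fun ε => (‖w 1‖ + ε + (B + ε) / (2 * (μ + A))) * t ^ A) (𝓝[>] 0)
      (𝓝 ((‖w 1‖ + B / (2 * (μ + A))) * t ^ A)) := by
    have : Continuous fun ε => (‖w 1‖ + ε + (B + ε) / (2 * (μ + A))) * t ^ A := by fun_prop
    simpa using (this.tendsto 0).mono_left nhdsWithin_le_nhds
  exact ge_of_tendsto hlim (eventually_nhdsWithin_of_forall hbound)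

/-- a Gronwall-type lemma: if `w` is C¹ on `[1,T)` and
`d/dt |w(t)|² ≤ (2A/t)|w(t)|² + (B/t^{1+μ})|w(t)|` on `(1,T)`, then
`|w(t)| ≤ (|w(1)| + B/(2(μ+A))) t^A` on `[1,T)`. -/
theorem stmt4 (T A B μ : ℝ) (hT : 1 < T) (hA : 0 ≤ A) (hB : 0 ≤ B) (hμ : 0 < μ)
    (w : ℝ → ℂ) (g : ℝ → ℝ)
    (hw : ContinuousOn w (Set.Ico (1 : ℝ) T))
    (hderiv : ∀ t ∈ Set.Ioo (1 : ℝ) T,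
      HasDerivAt (fun s => ‖w s‖^2) (g t) t)
    (hg : ∀ t ∈ Set.Ioo (1 : ℝ) T,
      g t ≤ (2 * A / t) * ‖w t‖^2
            + (B / t ^ ((1 : ℝ) + μ)) * ‖w t‖) :
    ∀ t ∈ Set.Ico (1 : ℝ) T,
      ‖w t‖ ≤ (‖w 1‖ + B / (2 * (μ + A))) * t ^ A :=
  stmt4_general T A B μ hA hB hμ w g hw hderiv hg
end
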